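/- Let S be a finite totally ordered set and P an attractive PCA dynamics on S^{Z^d}; let Λ ⊂ Z^d be finite and N ≥ 2. Then the N-tuple (P_Λ^-, P, ..., P, P_Λ^+), consisting of the finite-volume dynamics with minimal boundary condition, N−2 copies of P, and the finite-volume dynamics with maximal boundary condition (all viewed as PCA dynamics on S^{Z^d}), is increasing; consequently an increasing synchronous coupling P_Λ^- ⪯⊗ P ⪯⊗ ... ⪯⊗ P ⪯⊗ P_Λ^+ exists. -/

import Mathlib

open MeasureTheory ProbabilityTheory Filter

abbrev Site (d : ℕ) : Type := Fin d → ℤ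
abbrev Config (d : ℕ) (S : Type*) : Type _ := Site d → S

/-- Stochastic ordering of measures: `ν₁ ⪯ ν₂` iff `ν₁(f) ≤ ν₂(f)` for every
bounded measurable increasing `f`. -/
def StochLE {α : Type*} [MeasurableSpace α] [Preorder α] (μ ν : Measure α) : Prop :=
  ∀ f : α → ℝ, Measurable f → Monotone f → (∃ C, ∀ x, |f x| ≤ C) →
    ∫ x, f x ∂μ ≤ ∫ x, f x ∂ν

/-- A (local) PCA dynamics on `S^{ℤ^d}`: a Markov kernel together with its family of
local updating rules, the kernel being the product over sites of the updating rules. -/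
structure PCA (d : ℕ) (S : Type*) [MeasurableSpace S] where
  rule : Site d → Config d S → Measure S
  rule_prob : ∀ k η, IsProbabilityMeasure (rule k η)
  rule_local : ∀ k : Site d, ∃ V : Finset (Site d), ∀ η η' : Config d S,
      (∀ j ∈ V, η j = η' j) → rule k η = rule k η'
  toKernel : Kernel (Config d S) (Config d S)
  markov : IsMarkovKernel toKernel
  product : ∀ (η : Config d S) (Λ : Finset (Site d)) (y : Site d → S),
      toKernel η {σ : Config d S | ∀ k ∈ Λ, σ k = y k} = ∏ k ∈ Λ, rule k η {y k}


/-- An `N`-tuple of PCA dynamics is increasing if ordered configurations give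
stochastically ordered transition measures. -/
def IncreasingTuple {d : ℕ} {S : Type*} [MeasurableSpace S] [Preorder S] {N : ℕ}
    (P : Fin N → PCA d S) : Prop :=
  ∀ ζ : Fin N → Config d S, Monotone ζ →
    ∀ i j : Fin N, i ≤ j → StochLE ((P i).toKernel (ζ i)) ((P j).toKernel (ζ j))

/-- A PCA dynamics is attractive if it maps bounded measurable increasing functions to
increasing functions. -/
def Attractive {d : ℕ} {S : Type*} [MeasurableSpace S] [Preorder S] (P : PCA d S) : Prop :=
  ∀ f : Config d S → ℝ, Measurable f → Monotone f → (∃ C, ∀ x, |f x| ≤ C) →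
    Monotone fun η => ∫ σ, f σ ∂(P.toKernel η)

/-- A synchronous coupling of the PCA dynamics `P 1, …, P N`: a PCA on the spin space
`Fin N → S` whose site marginals are the updating rules of the `P i`. -/
structure SyncCoupling {d : ℕ} {S : Type*} [MeasurableSpace S] {N : ℕ}
    (P : Fin N → PCA d S) where
  Q : PCA d (Fin N → S)
  marginal : ∀ (k : Site d) (ζ : Fin N → Config d S) (i : Fin N),
    ((Q.rule k fun x j => ζ j x).map fun v => v i) = (P i).rule k (ζ i)

/-- A synchronous coupling is increasing when ordered configurations are a.s. mapped to
ordered configurations. -/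
def SyncCoupling.Increasing {d : ℕ} {S : Type*} [MeasurableSpace S] [Preorder S] {N : ℕ}
    {P : Fin N → PCA d S} (C : SyncCoupling P) : Prop :=
  ∀ ζ : Fin N → Config d S, Monotone ζ →
    C.Q.toKernel (fun x j => ζ j x) {ω : Config d (Fin N → S) | ∀ x, Monotone (ω x)} = 1

/-- The maximal element of a nonempty finite linear order. -/
noncomputable def topS (S : Type*) [Fintype S] [LinearOrder S] [Nonempty S] : S :=
  Finset.univ.max' Finset.univ_nonempty


/-- The minimal element of a nonempty finite linear order. -/
noncomputable def botS (S : Type*) [Fintype S] [LinearOrder S] [Nonempty S] : S :=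
  Finset.univ.min' Finset.univ_nonempty


/-- The updating rule of the finite volume PCA dynamics in `Λ` with boundary condition `τ`,
seen as a PCA on the whole configuration space: inside `Λ` the rule of `P` applied to the
configuration patched with `τ` outside `Λ`, outside `Λ` the spin is frozen at `τ`. -/
noncomputable def fvRule {d : ℕ} {S : Type*} [MeasurableSpace S] (P : PCA d S)
    (Λ : Finset (Site d)) (τ : Config d S) (k : Site d) (η : Config d S) : Measure S :=
  if k ∈ Λ then P.rule k (fun x => if x ∈ Λ then η x else τ x) else Measure.dirac (τ k)


/-!
All `N` dynamics are coupled synchronously through one uniform variable `u k` per site: the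
`i`-th spin at site `k` is `quantile μᵢ (u k)`, where `μᵢ` is the `i`-th updating rule at `k`.
The quantile transform is monotone in the stochastic order of its law, so the coupling maps
ordered tuples to ordered tuples as soon as the updating rules are stochastically ordered. For
`(P_Λ^-, P, …, P, P_Λ^+)` this follows from attractiveness: patching a configuration with `botS`
(`topS`) outside `Λ` lowers (raises) it, and a spin frozen at `botS` (`topS`) lies below (above)
every law. Integrating an increasing function against the layers of the coupling then shows that
the tuple is increasing.
-/

open Set

lemma integrable_of_bounded {α : Type*} [MeasurableSpace α] {μ : Measure α} [IsFiniteMeasure μ]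
    {f : α → ℝ} (hf : Measurable f) (hb : ∃ C, ∀ x, |f x| ≤ C) : Integrable f μ :=
  let ⟨C, hC⟩ := hb
  .of_bound hf.aestronglyMeasurable C (ae_of_all _ hC)

namespace StochLE

variable {α β : Type*} [MeasurableSpace α] [Preorder α]

protected lemma refl (μ : Measure α) : StochLE μ μ := fun _ _ _ _ => le_rfl

protected lemma trans {μ ν ρ : Measure α} (h₁ : StochLE μ ν) (h₂ : StochLE ν ρ) :
    StochLE μ ρ :=
  fun f hf hmono hb => (h₁ f hf hmono hb).trans (h₂ f hf hmono hb)

lemma map [MeasurableSpace β] [Preorder β] {μ ν : Measure α} (h : StochLE μ ν)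
    {g : α → β} (hg : Measurable g) (hmono : Monotone g) : StochLE (μ.map g) (ν.map g) := by
  rintro f hf hfmono ⟨C, hC⟩
  rw [integral_map hg.aemeasurable hf.aestronglyMeasurable,
    integral_map hg.aemeasurable hf.aestronglyMeasurable]
  exact h (f ∘ g) (hf.comp hg) (hfmono.comp hmono) ⟨C, fun x => hC (g x)⟩

lemma dirac_left {a : α} (ha : ∀ x, a ≤ x) (μ : Measure α) [IsProbabilityMeasure μ] :
    StochLE (Measure.dirac a) μ := by
  intro f hf hmono hb
  rw [integral_dirac' f a hf.stronglyMeasurable]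
  calc f a = ∫ _, f a ∂μ := by simp
    _ ≤ ∫ x, f x ∂μ :=
      integral_mono (integrable_const _) (integrable_of_bounded hf hb) fun x => hmono (ha x)

lemma dirac_right {a : α} (ha : ∀ x, x ≤ a) (μ : Measure α) [IsProbabilityMeasure μ] :
    StochLE μ (Measure.dirac a) := by
  intro f hf hmono hb
  rw [integral_dirac' f a hf.stronglyMeasurable]
  calc ∫ x, f x ∂μ ≤ ∫ _, f a ∂μ :=
      integral_mono (integrable_of_bounded hf hb) (integrable_const _) fun x => hmono (ha x)
    _ = f a := by simp

lemma measureReal_Iic_le {S : Type*} [MeasurableSpace S] [LinearOrder S] [Finite S]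
    [MeasurableSingletonClass S] {μ ν : Measure S} [IsProbabilityMeasure μ]
    [IsProbabilityMeasure ν] (h : StochLE μ ν) (s : S) :
    ν.real (Iic s) ≤ μ.real (Iic s) := by
  have hs : MeasurableSet (Ioi s) := (toFinite _).measurableSet
  have hmono : Monotone ((Ioi s).indicator (1 : S → ℝ)) := by
    intro x y hxy
    by_cases hx : s < x
    · rw [indicator_of_mem (show x ∈ Ioi s from hx),
        indicator_of_mem (show y ∈ Ioi s from hx.trans_le hxy)]
      exact le_rfl
    · exact (indicator_of_notMem hx _).trans_le (indicator_nonneg (fun _ _ => zero_le_one) _)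
  have hb : ∃ C, ∀ x, |(Ioi s).indicator (1 : S → ℝ) x| ≤ C :=
    ⟨1, fun x => by by_cases hx : s < x <;> simp [hx]⟩
  have := h _ (measurable_one.indicator hs) hmono hb
  rw [integral_indicator_one hs, integral_indicator_one hs] at this
  rw [← compl_Ioi, probReal_compl_eq_one_sub hs, probReal_compl_eq_one_sub hs]
  linarith

end StochLE

namespace PCA

variable {d : ℕ} {S : Type*} [MeasurableSpace S]

instance (W : PCA d S) (k : Site d) (η : Config d S) : IsProbabilityMeasure (W.rule k η) :=
  W.rule_prob k η

instance (W : PCA d S) : IsMarkovKernel W.toKernel := W.markov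

variable [Finite S] [Nonempty S] [MeasurableSingletonClass S] (W : PCA d S)

lemma toKernel_eq_infinitePi (η : Config d S) :
    W.toKernel η = Measure.infinitePi fun k => W.rule k η := by
  classical
  refine IsProjectiveLimit.unique (fun I => Measure.ext_iff_singleton.mpr fun y => ?_)
    (Measure.isProjectiveLimit_infinitePi _)
  set z : Config d S := fun k => if h : k ∈ I then y ⟨k, h⟩ else Classical.arbitrary S
  have hpre :
      I.restrict ⁻¹' ({y} : Set (I → S)) = {σ : Config d S | ∀ k ∈ I, σ k = z k} := by
    ext σ
    simp only [mem_preimage, mem_singleton_iff, funext_iff, Subtype.forall, z]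
    exact forall₂_congr fun k hk => by rw [dif_pos hk, Finset.restrict]
  rw [Measure.map_apply (Finset.measurable_restrict I) (measurableSet_singleton y), hpre,
    W.product, Measure.pi_singleton, ← Finset.prod_coe_sort]
  exact Finset.prod_congr rfl fun k _ => by simp [z]

lemma rule_eq_map_toKernel (k : Site d) (η : Config d S) :
    W.rule k η = (W.toKernel η).map fun σ => σ k := by
  rw [toKernel_eq_infinitePi, Measure.infinitePi_map_eval]

lemma measurable_rule (k : Site d) : Measurable (W.rule k) := by
  have : W.rule k = W.toKernel.map fun σ => σ k := by
    ext1 η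
    rw [Kernel.map_apply _ (measurable_pi_apply k), rule_eq_map_toKernel]
  rw [this]
  exact Kernel.measurable _

end PCA

section BoundaryCondition

variable {d : ℕ} {S : Type*} [Fintype S] [LinearOrder S] [Nonempty S]

lemma botS_le (s : S) : botS S ≤ s := Finset.min'_le _ _ (Finset.mem_univ s)

lemma le_topS (s : S) : s ≤ topS S := Finset.le_max' _ _ (Finset.mem_univ s)

variable [MeasurableSpace S] [MeasurableSingletonClass S] {P : PCA d S}

lemma Attractive.stochLE_rule (hA : Attractive P) {η η' : Config d S} (h : η ≤ η')
    (k : Site d) : StochLE (P.rule k η) (P.rule k η') := by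
  rw [P.rule_eq_map_toKernel, P.rule_eq_map_toKernel]
  exact StochLE.map (fun f hf hmono hb => hA f hf hmono hb h) (measurable_pi_apply k)
    fun _ _ hσ => hσ k

lemma Attractive.stochLE_fvRule_botS (hA : Attractive P) (Λ : Finset (Site d)) (k : Site d)
    (η : Config d S) : StochLE (fvRule P Λ (fun _ => botS S) k η) (P.rule k η) := by
  unfold fvRule
  split_ifs
  · exact hA.stochLE_rule (fun x => by dsimp only; split_ifs; exacts [le_rfl, botS_le _]) k
  · exact StochLE.dirac_left botS_le _

lemma Attractive.stochLE_fvRule_topS (hA : Attractive P) (Λ : Finset (Site d)) (k : Site d)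
    (η : Config d S) : StochLE (P.rule k η) (fvRule P Λ (fun _ => topS S) k η) := by
  unfold fvRule
  split_ifs
  · exact hA.stochLE_rule (fun x => by dsimp only; split_ifs; exacts [le_rfl, le_topS _]) k
  · exact StochLE.dirac_right le_topS _

end BoundaryCondition

section Quantile

variable {S : Type*} [Fintype S] [LinearOrder S] [Nonempty S] [MeasurableSpace S]

/-- Generalised inverse of `s ↦ μ.real (Iic s)`; `topS S` is added to the set so that
`quantile_le_iff` holds for every real `u`, not only for `u ≤ 1`. -/
noncomputable def quantile (μ : Measure S) (u : ℝ) : S :=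
  (insert (topS S) (Finset.univ.filter fun s => u ≤ μ.real (Iic s))).min'
    (Finset.insert_nonempty _ _)

variable {μ ν : Measure S}

lemma quantile_le_iff [IsFiniteMeasure μ] {u : ℝ} {s : S} :
    quantile μ u ≤ s ↔ s = topS S ∨ u ≤ μ.real (Iic s) := by
  simp only [quantile, Finset.min'_eq_inf', Finset.inf'_le_iff, Finset.mem_insert,
    Finset.mem_filter, Finset.mem_univ, true_and, id]
  constructor
  · rintro ⟨t, rfl | ht, hts⟩
    · exact Or.inl (le_antisymm (le_topS s) hts)
    · exact Or.inr (ht.trans (measureReal_mono (Iic_subset_Iic.mpr hts)))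
  · rintro (rfl | hs)
    · exact ⟨_, Or.inl rfl, le_rfl⟩
    · exact ⟨s, Or.inr hs, le_rfl⟩

lemma quantile_mono [IsFiniteMeasure μ] [IsFiniteMeasure ν]
    (h : ∀ s, ν.real (Iic s) ≤ μ.real (Iic s)) (u : ℝ) :
    quantile μ u ≤ quantile ν u := by
  rcases quantile_le_iff.mp (le_refl (quantile ν u)) with htop | hu
  · exact htop ▸ le_topS _
  · exact quantile_le_iff.mpr (Or.inr (hu.trans (h _)))

lemma quantile_lt_iff [IsFiniteMeasure μ] {u : ℝ} (hu : 0 < u) {s : S} :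
    quantile μ u < s ↔ u ≤ μ.real (Iio s) := by
  constructor
  · intro h
    rcases quantile_le_iff.mp (le_refl (quantile μ u)) with htop | hq
    · exact absurd (htop ▸ h) (not_lt.mpr (le_topS s))
    · exact hq.trans (measureReal_mono fun t ht => lt_of_le_of_lt ht h)
  · intro h
    obtain ⟨t, ht⟩ : (Iio s).Nonempty := by
      rw [nonempty_iff_ne_empty]
      rintro hempty
      rw [hempty, measureReal_empty] at h
      linarith
    have hne : (Finset.univ.filter (· < s)).Nonempty := ⟨t, by simpa using ht⟩
    have hm : (Finset.univ.filter (· < s)).max' hne < s :=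
      (Finset.mem_filter.mp (Finset.max'_mem _ hne)).2
    have hIio : Iio s ⊆ Iic ((Finset.univ.filter (· < s)).max' hne) :=
      fun t ht => Finset.le_max' _ _ (by simpa using ht)
    exact lt_of_le_of_lt (quantile_le_iff.mpr (Or.inr (h.trans (measureReal_mono hIio)))) hm

lemma Ioc_inter_quantile_preimage [IsProbabilityMeasure μ] (s : S) :
    Ioc 0 1 ∩ quantile μ ⁻¹' {s} = Ioc (μ.real (Iio s)) (μ.real (Iic s)) := by
  ext u
  simp only [mem_inter_iff, mem_Ioc, mem_preimage, mem_singleton_iff]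
  constructor
  · rintro ⟨⟨hu0, hu1⟩, rfl⟩
    refine ⟨not_le.mp fun h => lt_irrefl _ ((quantile_lt_iff hu0).mpr h), ?_⟩
    rcases quantile_le_iff.mp (le_refl (quantile μ u)) with htop | h
    · rwa [htop, show Iic (topS S) = univ from eq_univ_of_forall le_topS, probReal_univ]
    · exact h
  · rintro ⟨hG, hF⟩
    have hu0 : 0 < u := measureReal_nonneg.trans_lt hG
    refine ⟨⟨hu0, hF.trans measureReal_le_one⟩,
      le_antisymm (quantile_le_iff.mpr (Or.inr hF)) (not_lt.mp fun h => ?_)⟩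
    exact not_le.mpr hG ((quantile_lt_iff hu0).mp h)

lemma measurable_quantile {X : Type*} [MeasurableSpace X] {μ : X → Measure S}
    [∀ x, IsFiniteMeasure (μ x)] {u : X → ℝ}
    (hμ : ∀ s, Measurable fun x => (μ x).real (Iic s)) (hu : Measurable u) :
    Measurable fun x => quantile (μ x) (u x) := by
  have hle : ∀ s, MeasurableSet {x | quantile (μ x) (u x) ≤ s} := fun s => by
    simp_rw [quantile_le_iff, ofPred_or]
    exact (MeasurableSet.const _).union (measurableSet_le hu (hμ s))
  refine measurable_to_countable' fun s => ?_
  have : (fun x => quantile (μ x) (u x)) ⁻¹' {s} =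
      {x | quantile (μ x) (u x) ≤ s} \ ⋃ t < s, {x | quantile (μ x) (u x) ≤ t} := by
    ext x
    simp only [mem_preimage, mem_singleton_iff, Set.mem_sdiff, mem_ofPred_eq, mem_iUnion,
      not_exists, not_le]
    constructor
    · rintro rfl
      exact ⟨le_rfl, fun t ht => ht⟩
    · rintro ⟨hle, hlt⟩
      exact le_antisymm hle (not_lt.mp fun h => lt_irrefl _ (hlt _ h))
  rw [this]
  exact (hle s).diff (MeasurableSet.iUnion fun t => MeasurableSet.iUnion fun _ => hle t)

lemma measurable_quantile_const (μ : Measure S) [IsFiniteMeasure μ] : Measurable (quantile μ) :=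
  measurable_quantile (μ := fun _ => μ) (fun _ => measurable_const) measurable_id

lemma map_quantile_volume_Ioc [MeasurableSingletonClass S] (μ : Measure S)
    [IsProbabilityMeasure μ] :
    (volume.restrict (Ioc (0 : ℝ) 1)).map (quantile μ) = μ := by
  refine Measure.ext_iff_singleton.mpr fun s => ?_
  have hsplit : μ.real (Iic s) = μ.real (Iio s) + μ.real {s} := by
    rw [← Iio_union_right, measureReal_union
      (show Disjoint (Iio s) {s} from disjoint_singleton_right.mpr (lt_irrefl s))
      (measurableSet_singleton s)]
  rw [Measure.map_apply (measurable_quantile_const μ) (measurableSet_singleton s),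
    Measure.restrict_apply' measurableSet_Ioc, inter_comm, Ioc_inter_quantile_preimage,
    Real.volume_Ioc, hsplit, add_sub_cancel_left, ofReal_measureReal]

end Quantile

lemma measurable_map_of_measurable_uncurry {X Y Z : Type*} [MeasurableSpace X] [MeasurableSpace Y]
    [MeasurableSpace Z] (μ : Measure Y) [SFinite μ] {g : X → Y → Z}
    (hg : Measurable (Function.uncurry g)) : Measurable fun x => μ.map (g x) := by
  have : ∀ x, μ.map (g x) = (μ.map (Prod.mk x)).map (Function.uncurry g) := fun x => by
    rw [Measure.map_map hg measurable_prodMk_left]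
    rfl
  simp_rw [this]
  exact (Measure.measurable_map _ hg).comp Measurable.map_prodMk_left

instance : IsProbabilityMeasure (volume.restrict (Ioc (0 : ℝ) 1)) :=
  ⟨by simp⟩

section QuantileCoupling

variable {ι S : Type*} [Fintype S] [LinearOrder S] [Nonempty S] [MeasurableSpace S]

noncomputable def quantileCoupling (μ : ι → Measure S) : Measure (ι → S) :=
  (volume.restrict (Ioc (0 : ℝ) 1)).map fun u i => quantile (μ i) u

variable {μ : ι → Measure S} [∀ i, IsFiniteMeasure (μ i)]

lemma measurable_quantile_pi : Measurable fun u i => quantile (μ i) u :=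
  measurable_pi_lambda _ fun i => measurable_quantile_const (μ i)

instance : IsProbabilityMeasure (quantileCoupling μ) :=
  Measure.isProbabilityMeasure_map measurable_quantile_pi.aemeasurable

lemma quantileCoupling_map_eval [MeasurableSingletonClass S] [∀ i, IsProbabilityMeasure (μ i)]
    (i : ι) : (quantileCoupling μ).map (fun v => v i) = μ i := by
  rw [quantileCoupling, Measure.map_map (measurable_pi_apply i) measurable_quantile_pi]
  exact map_quantile_volume_Ioc (μ i)

lemma quantileCoupling_monotone [Preorder ι]
    (h : ∀ i j, i ≤ j → ∀ s, (μ j).real (Iic s) ≤ (μ i).real (Iic s)) :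
    quantileCoupling μ {v | Monotone v} = 1 := by
  refine le_antisymm prob_le_one ?_
  calc (1 : ENNReal) = volume.restrict (Ioc (0 : ℝ) 1) univ := measure_univ.symm
    _ = volume.restrict (Ioc (0 : ℝ) 1)
          ((fun u i => quantile (μ i) u) ⁻¹' {v | Monotone v}) := by
      congr
      exact (eq_univ_of_forall fun u i j hij => quantile_mono (h i j hij) u).symm
    _ ≤ quantileCoupling μ {v | Monotone v} :=
      Measure.le_map_apply measurable_quantile_pi.aemeasurable _

end QuantileCoupling

lemma setOf_forall_monotone_eq_univ_pi {ι κ β : Type*} [Preorder κ] [Preorder β] :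
    {ω : ι → κ → β | ∀ x, Monotone (ω x)} = univ.pi fun _ => {v | Monotone v} := by
  ext
  simp

section LayerLaws

variable {d N : ℕ} {S : Type*} [MeasurableSpace S] [Finite S] [Nonempty S]
  [MeasurableSingletonClass S]

lemma SyncCoupling.map_layer_toKernel {T : Fin N → PCA d S} (C : SyncCoupling T)
    (ζ : Fin N → Config d S) (i : Fin N) :
    (C.Q.toKernel fun x j => ζ j x).map (fun ω x => ω x i) = (T i).toKernel (ζ i) := by
  rw [C.Q.toKernel_eq_infinitePi, (T i).toKernel_eq_infinitePi,
    Measure.infinitePi_map_pi _ fun _ => measurable_pi_apply i]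
  exact congrArg _ (funext fun k => C.marginal k ζ i)

theorem SyncCoupling.Increasing.increasingTuple [Preorder S] {T : Fin N → PCA d S}
    {C : SyncCoupling T} (hC : C.Increasing) : IncreasingTuple T := by
  intro ζ hζ i j hij f hf hfmono hb
  have hlayer : ∀ i, Measurable fun ω : Config d (Fin N → S) => fun x => ω x i := by fun_prop
  have hmono : ∀ᵐ ω ∂C.Q.toKernel fun x j => ζ j x, ∀ x, Monotone (ω x) := by
    refine (ae_iff_measure_eq ?_).mpr (by rw [hC ζ hζ, measure_univ])
    rw [setOf_forall_monotone_eq_univ_pi]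
    exact (MeasurableSet.univ_pi fun _ => (toFinite _).measurableSet).nullMeasurableSet
  rw [← C.map_layer_toKernel ζ i, ← C.map_layer_toKernel ζ j,
    integral_map (hlayer i).aemeasurable hf.aestronglyMeasurable,
    integral_map (hlayer j).aemeasurable hf.aestronglyMeasurable]
  refine integral_mono_ae (integrable_of_bounded (hf.comp (hlayer i)) ?_)
    (integrable_of_bounded (hf.comp (hlayer j)) ?_) ?_
  · exact hb.imp fun c hc _ => hc _
  · exact hb.imp fun c hc _ => hc _
  · filter_upwards [hmono] with ω hω using hfmono fun x => hω x hij

end LayerLaws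

section SyncCoupling

variable {d N : ℕ} {S : Type*} [Fintype S] [LinearOrder S] [Nonempty S] [MeasurableSpace S]
  [MeasurableSingletonClass S] (T : Fin N → PCA d S)

noncomputable def siteLaws (k : Site d) (ω : Config d (Fin N → S)) : Fin N → Measure S :=
  fun i => (T i).rule k fun x => ω x i

instance (k : Site d) (ω : Config d (Fin N → S)) (i : Fin N) :
    IsProbabilityMeasure (siteLaws T k ω i) :=
  (T i).rule_prob _ _

noncomputable def quantileCouplingKernel :
    Kernel (Config d (Fin N → S)) (Config d (Fin N → S)) where
  toFun ω := Measure.infinitePi fun k => quantileCoupling (siteLaws T k ω)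
  measurable' := by
    -- the image of i.i.d. uniforms `u k`, jointly measurable in `(ω, u)`
    have hrepr : ∀ ω, Measure.infinitePi (fun k => quantileCoupling (siteLaws T k ω)) =
        (Measure.infinitePi fun _ : Site d => volume.restrict (Ioc (0 : ℝ) 1)).map
          fun u k i => quantile (siteLaws T k ω i) (u k) := fun ω =>
      (Measure.infinitePi_map_pi _ fun _ => measurable_quantile_pi).symm
    simp_rw [hrepr]
    refine measurable_map_of_measurable_uncurry _ (measurable_pi_lambda _ fun k =>
      measurable_pi_lambda _ fun i => measurable_quantile (fun s => ?_)
        ((measurable_pi_apply k).comp measurable_snd))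
    have hlayer : Measurable fun ω : Config d (Fin N → S) => fun x => ω x i := by fun_prop
    exact (Measure.measurable_coe (toFinite _).measurableSet).ennreal_toReal.comp
      (((T i).measurable_rule k).comp (hlayer.comp measurable_fst))

noncomputable def syncCouplingPCA : PCA d (Fin N → S) where
  rule k ω := quantileCoupling (siteLaws T k ω)
  rule_prob _ _ := inferInstance
  rule_local k := by
    refine ⟨Finset.univ.biUnion fun i => ((T i).rule_local k).choose, fun ω ω' h => ?_⟩
    refine congrArg quantileCoupling (funext fun i => ((T i).rule_local k).choose_spec _ _ ?_)
    exact fun j hj => congrFun (h j (Finset.mem_biUnion.mpr ⟨i, Finset.mem_univ i, hj⟩)) i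
  toKernel := quantileCouplingKernel T
  markov := ⟨fun ω => by dsimp [quantileCouplingKernel]; infer_instance⟩
  product ω Λ y := Measure.infinitePi_pi _ fun k _ => measurableSet_singleton (y k)

noncomputable def syncCoupling : SyncCoupling T :=
  ⟨syncCouplingPCA T, fun k _ i => quantileCoupling_map_eval (μ := siteLaws T k _) i⟩

theorem syncCoupling_increasing
    (h : ∀ ζ : Fin N → Config d S, Monotone ζ → ∀ k i j, i ≤ j →
      StochLE ((T i).rule k (ζ i)) ((T j).rule k (ζ j))) :
    (syncCoupling T).Increasing := by
  intro ζ hζ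
  change Measure.infinitePi _ _ = 1
  rw [setOf_forall_monotone_eq_univ_pi,
    Measure.infinitePi_pi_univ _ fun _ => (toFinite _).measurableSet]
  exact (tprod_congr fun k => quantileCoupling_monotone fun i j hij =>
    (h ζ hζ k i j hij).measureReal_Iic_le).trans tprod_one

end SyncCoupling

lemma Attractive.stochLE_rule_boundaryTuple {d N : ℕ} {S : Type*} [Fintype S] [LinearOrder S]
    [Nonempty S] [MeasurableSpace S] [MeasurableSingletonClass S] {P Pm Pp : PCA d S}
    (hA : Attractive P) {Λ : Finset (Site d)}
    (hPm : ∀ k η, Pm.rule k η = fvRule P Λ (fun _ => botS S) k η)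
    (hPp : ∀ k η, Pp.rule k η = fvRule P Λ (fun _ => topS S) k η) {T : Fin N → PCA d S}
    (hT : T = fun i : Fin N => if (i : ℕ) = 0 then Pm else if (i : ℕ) = N - 1 then Pp else P)
    {ζ : Fin N → Config d S} (hζ : Monotone ζ) (k : Site d) {i j : Fin N} (hij : i ≤ j) :
    StochLE ((T i).rule k (ζ i)) ((T j).rule k (ζ j)) := by
  rcases hij.eq_or_lt with rfl | hlt
  · exact .refl _
  have hlower : StochLE ((T i).rule k (ζ i)) (P.rule k (ζ i)) := by
    have : (i : ℕ) ≠ N - 1 := by omega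
    subst hT
    dsimp only
    split_ifs
    · exact hPm k _ ▸ hA.stochLE_fvRule_botS Λ k _
    · exact .refl _
  have hupper : StochLE (P.rule k (ζ j)) ((T j).rule k (ζ j)) := by
    have : (j : ℕ) ≠ 0 := by omega
    subst hT
    dsimp only
    rw [if_neg this]
    split_ifs
    · exact hPp k _ ▸ hA.stochLE_fvRule_topS Λ k _
    · exact .refl _
  exact hlower.trans ((hA.stochLE_rule (hζ hlt.le) k).trans hupper)

theorem stmt13_general {d N : ℕ}
    {S : Type} [Fintype S] [LinearOrder S] [Nonempty S]
    [MeasurableSpace S] [MeasurableSingletonClass S]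
    (P Pm Pp : PCA d S) (hA : Attractive P) (Λ : Finset (Site d))
    (hPm : ∀ k η, Pm.rule k η = fvRule P Λ (fun _ => botS S) k η)
    (hPp : ∀ k η, Pp.rule k η = fvRule P Λ (fun _ => topS S) k η)
    (T : Fin N → PCA d S)
    (hT : T = fun i : Fin N => if (i : ℕ) = 0 then Pm else if (i : ℕ) = N - 1 then Pp else P) :
    IncreasingTuple T ∧ ∃ C : SyncCoupling T, C.Increasing := by
  have hC : (syncCoupling T).Increasing := syncCoupling_increasing T fun ζ hζ k _ _ hij =>
    hA.stochLE_rule_boundaryTuple hPm hPp hT hζ k hij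
  exact ⟨hC.increasingTuple, _, hC⟩

/-- For an attractive PCA `P`, the tuple
`(P_Λ^-, P, …, P, P_Λ^+)` is increasing and admits an increasing synchronous coupling. -/
theorem stmt13 {d N : ℕ} (hd : 1 ≤ d) (hN : 2 ≤ N)
    {S : Type} [Fintype S] [LinearOrder S] [Nonempty S]
    [MeasurableSpace S] [MeasurableSingletonClass S]
    (P Pm Pp : PCA d S) (hA : Attractive P) (Λ : Finset (Site d))
    (hPm : ∀ k η, Pm.rule k η = fvRule P Λ (fun _ => botS S) k η)
    (hPp : ∀ k η, Pp.rule k η = fvRule P Λ (fun _ => topS S) k η)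
    (T : Fin N → PCA d S)
    (hT : T = fun i : Fin N => if (i : ℕ) = 0 then Pm else if (i : ℕ) = N - 1 then Pp else P) :
    IncreasingTuple T ∧ ∃ C : SyncCoupling T, C.Increasing :=
  stmt13_general P Pm Pp hA Λ hPm hPp T hT
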